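/- arXiv:math/0309182 — 3 statements merged into one kernel-verified Lean document; each statement's English description precedes it below -/
import Mathlib

section
/- Let X be a finite partially ordered set, L a Markov generator on X, A ⊆ X, and ψ : X → ℝ such that: (i) ψ(x) > 0 for x ∉ A and ψ(x) = 0 for x ∈ A; (ii) ψ is decreasing on A^c (x ≤ y with x,y ∉ A implies ψ(y) ≤ ψ(x)); (iii) x ↦ (Lψ)(x)/ψ(x) is increasing on A^c; (iv) the Markov generator L_ψ on A^c, with off-diagonal rates L_ψ(x,y) = L(x,y)·ψ(y)/ψ(x) for x ≠ y in A^c and diagonal entries making the rows sum to zero, is monotone for the order restricted to A^c. Then for every t ≥ 0 the function x ↦ P_x(τ_A > t)/ψ(x) is increasing on A^c, i.e. for x ≤ y with x,y ∉ A one has P_x(τ_A > t)/ψ(x) ≤ P_y(τ_A > t)/ψ(y). -/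
open scoped Classical
noncomputable section

/-- The stopped generator `L̄`: the rows indexed by `A` are replaced by zero rows. -/
def stoppedGen {X : Type*} (L : Matrix X X ℝ) (A : Set X) : Matrix X X ℝ :=
  Matrix.of fun x y => if x ∈ A then 0 else L x y

/-- The survival probability `P_x(τ_A > t) = (e^{t L̄} 1_{A^c})(x)`. -/
def survProb {X : Type*} [Fintype X] [DecidableEq X]
    (L : Matrix X X ℝ) (A : Set X) (t : ℝ) (x : X) : ℝ :=
  (NormedSpace.exp (t • stoppedGen L A)).mulVec (fun y => if y ∈ A then 0 else 1) x

/-- A generator (matrix) is monotone if its semigroup `e^{tL}` sends increasing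
functions to increasing functions, for every `t ≥ 0`. -/
def IsMonotoneGen {X : Type*} [Fintype X] [DecidableEq X] [PartialOrder X]
    (L : Matrix X X ℝ) : Prop :=
  ∀ t : ℝ, 0 ≤ t → ∀ f : X → ℝ, Monotone f →
    Monotone ((NormedSpace.exp (t • L)).mulVec f)

/-- The transformed generator `L_ψ` on `A^c`: off-diagonal rates
`L_ψ(x,y) = L(x,y) ψ(y)/ψ(x)`, diagonal entries making rows sum to zero. -/
def psiGen {X : Type*} [Fintype X] (L : Matrix X X ℝ) (A : Set X) (ψ : X → ℝ) :
    Matrix {x : X // x ∉ A} {x : X // x ∉ A} ℝ :=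
  Matrix.of fun x y =>
    if x = y then -(∑ z : {x : X // x ∉ A}, if z = x then 0 else L x.1 z.1 * ψ z.1 / ψ x.1)
    else L x.1 y.1 * ψ y.1 / ψ x.1


/-!
Dividing by `ψ` turns the killed semigroup into a Feynman–Kac semigroup: on `Aᶜ` the matrix
`K(x, y) = L(x, y) ψ(y) / ψ(x)` equals `L_ψ + diag V` with `V = Lψ / ψ`, and
`P_x(τ_A > t) / ψ(x) = (e^{tK} ψ⁻¹)(x)`. By the Lie–Trotter formula, `e^{tK}` is the limit of
`(e^{s L_ψ} e^{s diag V})^n` with `s = t / n`, and both factors preserve the closed cone of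
nonnegative increasing functions: `e^{s L_ψ}` has nonnegative entries and is monotone, while
`e^{s diag V}` multiplies by the positive increasing weight `e^{sV}`. Since `ψ⁻¹` lies in that cone,
so does `e^{tK} ψ⁻¹`.
-/

open NormedSpace Filter Topology Asymptotics

theorem norm_pow_sub_pow_le {𝔸 : Type*} [NormedRing 𝔸] [NormOneClass 𝔸] (P Q : 𝔸) {R : ℝ}
    (hP : ‖P‖ ≤ R) (hQ : ‖Q‖ ≤ R) (hR : 1 ≤ R) (n : ℕ) :
    ‖P ^ n - Q ^ n‖ ≤ n * R ^ n * ‖P - Q‖ := by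
  induction n with
  | zero => simp
  | succ n ih =>
    have hPn : ‖P ^ n‖ ≤ R ^ n := (norm_pow_le P n).trans (by gcongr)
    calc ‖P ^ (n + 1) - Q ^ (n + 1)‖ = ‖P ^ n * (P - Q) + (P ^ n - Q ^ n) * Q‖ := by
          rw [pow_succ, pow_succ]; noncomm_ring
      _ ≤ R ^ n * ‖P - Q‖ + n * R ^ n * ‖P - Q‖ * R := by
          refine (norm_add_le _ _).trans (add_le_add ?_ ?_) <;> refine (norm_mul_le _ _).trans ?_
          · gcongr
          · gcongr
      _ ≤ (n + 1 : ℕ) * R ^ (n + 1) * ‖P - Q‖ := by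
          have h := mul_le_mul_of_nonneg_left hR
            (mul_nonneg (pow_nonneg (zero_le_one.trans hR) n) (norm_nonneg (P - Q)))
          push_cast; rw [pow_succ]; nlinarith

theorem norm_exp_le_exp_norm {𝔸 : Type*} [NormedRing 𝔸] [NormOneClass 𝔸] [NormedAlgebra ℝ 𝔸]
    (x : 𝔸) : ‖exp x‖ ≤ Real.exp ‖x‖ := by
  rw [exp_eq_tsum ℝ, Real.exp_eq_exp_ℝ, exp_eq_tsum ℝ]
  refine (norm_tsum_le_tsum_norm (norm_expSeries_summable' x)).trans <|
    (norm_expSeries_summable' x).tsum_le_tsum (fun n => ?_) (expSeries_summable' ‖x‖)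
  rw [norm_smul, smul_eq_mul, norm_inv, Real.norm_natCast]
  gcongr
  exact norm_pow_le x n

theorem norm_exp_smul_le {𝔸 : Type*} [NormedRing 𝔸] [NormOneClass 𝔸] [NormedAlgebra ℝ 𝔸]
    (s : ℝ) (x : 𝔸) : ‖exp (s • x)‖ ≤ Real.exp (|s| * ‖x‖) :=
  (norm_exp_le_exp_norm _).trans_eq (by rw [norm_smul, Real.norm_eq_abs])

theorem isLittleO_exp_smul_mul_exp_smul_sub_exp_smul_add
    {𝔸 : Type*} [NormedRing 𝔸] [NormedAlgebra ℝ 𝔸] [CompleteSpace 𝔸] (M D : 𝔸) :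
    (fun s : ℝ => exp (s • M) * exp (s • D) - exp (s • (M + D))) =o[𝓝 0] fun s => s := by
  have h := ((hasDerivAt_exp_smul_const M (0 : ℝ)).fun_mul
    (hasDerivAt_exp_smul_const D (0 : ℝ))).fun_sub (hasDerivAt_exp_smul_const (M + D) (0 : ℝ))
  simp only [zero_smul, exp_zero, one_mul, mul_one, sub_self] at h
  simpa only [zero_smul, exp_zero, mul_one, sub_self, sub_zero, smul_zero]
    using hasDerivAt_iff_isLittleO.1 h

theorem tendsto_exp_smul_mul_exp_smul_pow
    {𝔸 : Type*} [NormedRing 𝔸] [NormOneClass 𝔸] [NormedAlgebra ℝ 𝔸] [CompleteSpace 𝔸]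
    (M D : 𝔸) (t : ℝ) :
    Tendsto (fun n : ℕ => (exp ((t / n) • M) * exp ((t / n) • D)) ^ n) atTop
      (𝓝 (exp (t • (M + D)))) := by
  -- `exp_nsmul` is stated for normed `ℚ`-algebras
  let _ : NormedAlgebra ℚ 𝔸 := NormedAlgebra.restrictScalars ℚ ℝ 𝔸
  set K := ‖M‖ + ‖D‖
  have herr : Tendsto (fun n : ℕ => ‖exp ((t / n) • M) * exp ((t / n) • D)
      - exp ((t / n) • (M + D))‖ / (n : ℝ)⁻¹) atTop (𝓝 0) := by
    refine IsLittleO.tendsto_div_nhds_zero ?_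
    have := (isLittleO_exp_smul_mul_exp_smul_sub_exp_smul_add M D).comp_tendsto
      (tendsto_const_div_atTop_nhds_zero_nat t)
    refine this.norm_left.trans_isBigO ?_
    simpa only [Function.comp_def, div_eq_mul_inv]
      using isBigO_const_mul_self t (fun n : ℕ => (n : ℝ)⁻¹) atTop
  rw [tendsto_iff_norm_sub_tendsto_zero]
  refine squeeze_zero_norm' ?_ (by simpa only [mul_zero] using herr.const_mul (Real.exp (|t| * K)))
  filter_upwards [eventually_ge_atTop 1] with n hn
  set s := t / n
  have hns : (n : ℝ) * |s| = |t| := by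
    rw [abs_div, Nat.abs_cast]; field_simp
  have hR : 1 ≤ Real.exp (|s| * K) := Real.one_le_exp (by positivity)
  have hP : ‖exp (s • M) * exp (s • D)‖ ≤ Real.exp (|s| * K) :=
    (norm_mul_le _ _).trans <| (mul_le_mul (norm_exp_smul_le s M) (norm_exp_smul_le s D)
      (norm_nonneg _) (Real.exp_nonneg _)).trans_eq (by rw [← Real.exp_add, mul_add])
  have hQ : ‖exp (s • (M + D))‖ ≤ Real.exp (|s| * K) :=
    (norm_exp_smul_le s _).trans (by gcongr; exact norm_add_le M D)
  have hQn : exp (s • (M + D)) ^ n = exp (t • (M + D)) := by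
    rw [← exp_nsmul, ← Nat.cast_smul_eq_nsmul ℝ, smul_smul]
    congr 2
    simp only [s]
    field_simp
  rw [norm_norm, ← hQn]
  refine (norm_pow_sub_pow_le _ _ hP hQ hR n).trans_eq ?_
  rw [← Real.exp_nat_mul, ← mul_assoc, hns, div_inv_eq_mul]
  ring

namespace Matrix

attribute [local instance] Matrix.linftyOpNormedRing Matrix.linftyOpNormedAlgebra

variable {m n : Type*} [Fintype m] [DecidableEq m] [Fintype n] [DecidableEq n]

theorem exp_mul_eq_mul_exp_of_mul_eq {G : Matrix m m ℝ} {H : Matrix n n ℝ} {E : Matrix m n ℝ}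
    (h : G * E = E * H) : exp G * E = E * exp H := by
  have hpow : ∀ k : ℕ, G ^ k * E = E * H ^ k := by
    intro k
    induction k with
    | zero => simp
    | succ k ih => rw [pow_succ', Matrix.mul_assoc, ih, ← Matrix.mul_assoc, h, Matrix.mul_assoc,
        ← pow_succ']
  have hG := (exp_series_hasSum_exp' (𝕂 := ℝ) G).map (addMonoidHomMulRight E)
    (continuous_id.matrix_mul continuous_const)
  have hH := (exp_series_hasSum_exp' (𝕂 := ℝ) H).map (addMonoidHomMulLeft E)
    (continuous_const.matrix_mul continuous_id)
  refine hG.unique (hH.congr_fun fun k => ?_)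
  simp [addMonoidHomMulLeft, addMonoidHomMulRight, hpow]

theorem exp_apply_nonneg_of_nonneg {N : Matrix n n ℝ} (hN : ∀ i j, 0 ≤ N i j) (i j : n) :
    0 ≤ exp N i j := by
  have hpow : ∀ k : ℕ, ∀ i j, 0 ≤ (N ^ k) i j := by
    intro k
    induction k with
    | zero => intro i j; by_cases h : i = j <;> simp [h]
    | succ k ih => exact fun i j => Finset.sum_nonneg fun l _ => mul_nonneg (ih i l) (hN l j)
  have hsum := Pi.hasSum.1 (Pi.hasSum.1 (exp_series_hasSum_exp' (𝕂 := ℝ) N) i) j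
  exact hsum.nonneg fun k => mul_nonneg (by positivity) (hpow k i j)

theorem exp_apply_nonneg_of_offDiag_nonneg {N : Matrix n n ℝ}
    (hN : ∀ i j, i ≠ j → 0 ≤ N i j) (i j : n) : 0 ≤ exp N i j := by
  obtain ⟨c, hc⟩ := (Set.finite_range fun k => -N k k).bddAbove
  have hshift : ∀ i j, 0 ≤ (N + c • 1) i j := by
    intro i j
    by_cases h : i = j
    · subst h
      have := hc ⟨i, rfl⟩
      simp only [add_apply, smul_apply, one_apply_eq, smul_eq_mul, mul_one]
      linarith
    · simpa [h] using hN i j h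
  have hexp : exp N = Real.exp (-c) • exp (N + c • 1) := by
    have hscalar : exp ((-c) • (1 : Matrix n n ℝ)) = Real.exp (-c) • 1 := by
      rw [← diagonal_one, ← diagonal_smul, ← diagonal_smul, exp_diagonal, Pi.exp_def,
        Real.exp_eq_exp_ℝ]
      congr 1
      funext
      simp
    conv_lhs => rw [show N = (N + c • 1) + (-c) • 1 by rw [neg_smul]; abel]
    rw [Matrix.exp_add_of_commute _ _ ((Commute.one_right _).smul_right _), hscalar,
      mul_smul_comm, mul_one]
  rw [hexp, smul_apply, smul_eq_mul]
  exact mul_nonneg (Real.exp_nonneg _) (exp_apply_nonneg_of_nonneg hshift i j)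

theorem exp_smul_diagonal_mulVec (s : ℝ) (V f : n → ℝ) :
    exp (s • diagonal V) *ᵥ f = fun i => Real.exp (s * V i) * f i := by
  ext i
  rw [← diagonal_smul, exp_diagonal, mulVec_diagonal, Pi.exp_def, Real.exp_eq_exp_ℝ]
  rfl

end Matrix

open Matrix

theorem monotone_exp_smul_add_diagonal_mulVec {ι : Type*} [Fintype ι] [DecidableEq ι]
    [PartialOrder ι] {M : Matrix ι ι ℝ} (hM_offDiag : ∀ i j, i ≠ j → 0 ≤ M i j)
    (hM : IsMonotoneGen M) {V : ι → ℝ} (hV : Monotone V) {t : ℝ} (ht : 0 ≤ t) {f : ι → ℝ}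
    (hf_nonneg : 0 ≤ f) (hf : Monotone f) : Monotone (exp (t • (M + diagonal V)) *ᵥ f) := by
  rcases isEmpty_or_nonempty ι with hι | hι
  · exact fun i => isEmptyElim i
  let _ := Matrix.linftyOpNormedRing (n := ι) (α := ℝ)
  let _ := Matrix.linftyOpNormedAlgebra (n := ι) (R := ℝ) (α := ℝ)
  set C : Set (ι → ℝ) := {g | 0 ≤ g ∧ Monotone g}
  have hstep : ∀ s : ℝ, 0 ≤ s → ∀ g ∈ C, (exp (s • M) * exp (s • diagonal V)) *ᵥ g ∈ C := by
    rintro s hs g ⟨hg_nonneg, hg⟩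
    rw [← mulVec_mulVec, exp_smul_diagonal_mulVec]
    have hweight : Monotone fun i => Real.exp (s * V i) :=
      Real.exp_monotone.comp (hV.const_mul hs)
    refine ⟨fun i => Finset.sum_nonneg fun j _ => mul_nonneg ?_ ?_,
      hM s hs _ (hweight.mul hg (fun _ => Real.exp_nonneg _) hg_nonneg)⟩
    · exact exp_apply_nonneg_of_offDiag_nonneg
        (fun i j hij => mul_nonneg hs (hM_offDiag i j hij)) i j
    · exact mul_nonneg (Real.exp_nonneg _) (hg_nonneg j)
  have hpow : ∀ s : ℝ, 0 ≤ s → ∀ k : ℕ,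
      ((exp (s • M) * exp (s • diagonal V)) ^ k) *ᵥ f ∈ C := by
    intro s hs k
    induction k with
    | zero => simpa using ⟨hf_nonneg, hf⟩
    | succ k ih => simpa only [pow_succ', ← mulVec_mulVec] using hstep s hs _ ih
  intro i j hij
  have hlim := tendsto_exp_smul_mul_exp_smul_pow M (diagonal V) t
  have hcont : ∀ k, Continuous fun P : Matrix ι ι ℝ => (P *ᵥ f) k :=
    fun k => (continuous_apply k).comp (continuous_id.matrix_mulVec continuous_const)
  exact le_of_tendsto_of_tendsto' ((hcont i).tendsto _ |>.comp hlim)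
    ((hcont j).tendsto _ |>.comp hlim) fun n => (hpow _ (by positivity) n).2 hij

section SurvivalProbability

variable {X : Type*} [Fintype X] [DecidableEq X] (L : Matrix X X ℝ) (A : Set X) (ψ : X → ℝ)

def doobTransform : Matrix {x : X // x ∉ A} {x : X // x ∉ A} ℝ :=
  of fun a b => L a b * ψ b / ψ a

theorem psiGen_add_diagonal (hψ_A : ∀ x ∈ A, ψ x = 0) :
    psiGen L A ψ + diagonal (fun a : {x : X // x ∉ A} => (L *ᵥ ψ) a / ψ a)
      = doobTransform L A ψ := by
  ext a b
  by_cases hab : a = b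
  · subst hab
    have hLψ : (L *ᵥ ψ) a = ∑ z : {x : X // x ∉ A}, L a z * ψ z := by
      rw [mulVec, dotProduct, ← Fintype.sum_subtype_add_sum_subtype (· ∈ A),
        Finset.sum_eq_zero fun z _ => by rw [hψ_A z z.2, mul_zero], zero_add]
    have hdiag : psiGen L A ψ a a
        = -∑ z : {x : X // x ∉ A}, if z = a then 0 else L a z * ψ z / ψ a := by
      simp only [psiGen, of_apply, if_true]
      congr!
    rw [Matrix.add_apply, hdiag, diagonal_apply_eq, hLψ, Finset.sum_div, doobTransform,
      of_apply, Finset.sum_ite, Finset.sum_const_zero, zero_add,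
      Finset.filter_ne', Finset.sum_erase_eq_sub (Finset.mem_univ a)]
    ring
  · simp [psiGen, doobTransform, hab]

def scaledInclusion : Matrix X {x : X // x ∉ A} ℝ :=
  (diagonal ψ).submatrix id Subtype.val

theorem stoppedGen_mul_scaledInclusion (hψ : ∀ x ∉ A, ψ x ≠ 0) :
    stoppedGen L A * scaledInclusion A ψ = scaledInclusion A ψ * doobTransform L A ψ := by
  ext x b
  by_cases hx : x ∈ A
  · simp only [stoppedGen, scaledInclusion, doobTransform, mul_apply, of_apply, hx, ↓reduceIte,
      submatrix_apply, id_eq, zero_mul, Finset.sum_const_zero]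
    exact (Finset.sum_eq_zero fun j _ => by
      rw [diagonal_apply_ne _ fun h : x = j => j.2 (h ▸ hx), zero_mul]).symm
  · simp only [stoppedGen, scaledInclusion, doobTransform, mul_apply, of_apply, hx, ↓reduceIte,
      submatrix_apply, id_eq]
    rw [Fintype.sum_eq_single b.1 fun j hj => by rw [diagonal_apply_ne _ hj, mul_zero],
      Fintype.sum_eq_single ⟨x, hx⟩ fun j hj => by
        rw [diagonal_apply_ne _ fun h => hj (Subtype.ext h.symm), zero_mul],
      diagonal_apply_eq, diagonal_apply_eq]
    field_simp [hψ x hx]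

theorem scaledInclusion_mulVec_apply (w : {x : X // x ∉ A} → ℝ) (y : X) :
    (scaledInclusion A ψ *ᵥ w) y = if h : y ∈ A then 0 else ψ y * w ⟨y, h⟩ := by
  simp only [scaledInclusion, mulVec, dotProduct, submatrix_apply, id]
  split_ifs with hy
  · exact Finset.sum_eq_zero fun j _ => by
      rw [diagonal_apply_ne _ fun h : y = j => j.2 (h ▸ hy), zero_mul]
  · refine (Fintype.sum_eq_single ⟨y, hy⟩ fun j hj => ?_).trans ?_
    · rw [diagonal_apply_ne _ fun h => hj (Subtype.ext h.symm), zero_mul]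
    · rw [diagonal_apply_eq]

theorem survProb_div_eq (hψ : ∀ x ∉ A, ψ x ≠ 0) (t : ℝ) {x : X} (hx : x ∉ A) :
    survProb L A t x / ψ x = (exp (t • doobTransform L A ψ) *ᵥ fun a => (ψ a)⁻¹) ⟨x, hx⟩ := by
  have hind : scaledInclusion A ψ *ᵥ (fun a => (ψ a)⁻¹) = fun y => if y ∈ A then 0 else 1 := by
    ext y
    rw [scaledInclusion_mulVec_apply]
    split_ifs with hy
    · rfl
    · exact mul_inv_cancel₀ (hψ y hy)
  have hexp : exp (t • stoppedGen L A) * scaledInclusion A ψ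
      = scaledInclusion A ψ * exp (t • doobTransform L A ψ) :=
    exp_mul_eq_mul_exp_of_mul_eq (by
      rw [Matrix.smul_mul, stoppedGen_mul_scaledInclusion L A ψ hψ, Matrix.mul_smul])
  rw [survProb, ← hind, mulVec_mulVec, hexp, ← mulVec_mulVec, scaledInclusion_mulVec_apply,
    dif_neg hx, mul_div_cancel_left₀ _ (hψ x hx)]

end SurvivalProbability

theorem survival_ratio_increasing_general
    {X : Type*} [Fintype X] [DecidableEq X] [PartialOrder X]
    (L : Matrix X X ℝ)
    (hL_offdiag : ∀ x y, x ≠ y → 0 ≤ L x y)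
    (A : Set X) (ψ : X → ℝ)
    (hψ_pos : ∀ x ∉ A, 0 < ψ x) (hψ_A : ∀ x ∈ A, ψ x = 0)
    (hψ_dec : ∀ x ∉ A, ∀ y ∉ A, x ≤ y → ψ y ≤ ψ x)
    (hV_inc : ∀ x ∉ A, ∀ y ∉ A, x ≤ y → L.mulVec ψ x / ψ x ≤ L.mulVec ψ y / ψ y)
    (hmono : IsMonotoneGen (psiGen L A ψ)) :
    ∀ t : ℝ, 0 ≤ t → ∀ x ∉ A, ∀ y ∉ A, x ≤ y →
      survProb L A t x / ψ x ≤ survProb L A t y / ψ y := by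
  intro t ht x hx y hy hxy
  have hψ : ∀ x ∉ A, ψ x ≠ 0 := fun x hx => (hψ_pos x hx).ne'
  have hoffDiag : ∀ a b : {x : X // x ∉ A}, a ≠ b → 0 ≤ psiGen L A ψ a b := by
    intro a b hab
    simp only [psiGen, of_apply, if_neg hab]
    exact div_nonneg (mul_nonneg (hL_offdiag a b (Subtype.coe_ne_coe.2 hab)) (hψ_pos b b.2).le)
      (hψ_pos a a.2).le
  rw [survProb_div_eq L A ψ hψ t hx, survProb_div_eq L A ψ hψ t hy,
    ← psiGen_add_diagonal L A ψ hψ_A]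
  exact monotone_exp_smul_add_diagonal_mulVec hoffDiag hmono
    (fun a b hab => hV_inc a a.2 b b.2 hab) ht (fun a => (inv_pos.2 (hψ_pos a a.2)).le)
    (fun a b hab => inv_anti₀ (hψ_pos b b.2) (hψ_dec a a.2 b b.2 hab))
    (show (⟨x, hx⟩ : {x : X // x ∉ A}) ≤ ⟨y, hy⟩ from hxy)

/-- **Lemma 2.1 (the monotone method).**  If `ψ > 0` on `A^c`, `ψ = 0` on `A`, `ψ` is
decreasing on `A^c`, `Lψ/ψ` is increasing on `A^c` and the generator `L_ψ` is monotone,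
then `x ↦ P_x(τ_A > t)/ψ(x)` is increasing on `A^c` for every `t ≥ 0`. -/
theorem survival_ratio_increasing
    {X : Type*} [Fintype X] [DecidableEq X] [PartialOrder X]
    (L : Matrix X X ℝ)
    (hL_offdiag : ∀ x y, x ≠ y → 0 ≤ L x y)
    (hL_row : ∀ x, ∑ y, L x y = 0)
    (A : Set X) (ψ : X → ℝ)
    (hψ_pos : ∀ x ∉ A, 0 < ψ x) (hψ_A : ∀ x ∈ A, ψ x = 0)
    (hψ_dec : ∀ x ∉ A, ∀ y ∉ A, x ≤ y → ψ y ≤ ψ x)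
    (hV_inc : ∀ x ∉ A, ∀ y ∉ A, x ≤ y → L.mulVec ψ x / ψ x ≤ L.mulVec ψ y / ψ y)
    (hmono : IsMonotoneGen (psiGen L A ψ)) :
    ∀ t : ℝ, 0 ≤ t → ∀ x ∉ A, ∀ y ∉ A, x ≤ y →
      survProb L A t x / ψ x ≤ survProb L A t y / ψ y :=
  survival_ratio_increasing_general L hL_offdiag A ψ hψ_pos hψ_A hψ_dec hV_inc hmono
end
end

section
/- Let X be a finite set, L a Markov generator on X, A ⊆ X, and ψ : X → ℝ with ψ > 0 on A^c and ψ ≡ 0 on A. Let L̄ be the stopped generator, let V : X → ℝ be defined by V(x) = (Lψ)(x)/ψ(x) for x ∉ A and V(x) = 0 for x ∈ A, and let K be the matrix with K(x,y) = L(x,y)·ψ(y)/ψ(x) for x ≠ y with x,y ∈ A^c, K(x,x) = −Σ_{y∈A^c, y≠x} K(x,y) for x ∈ A^c, and all rows indexed by A equal to zero. Then for every φ : X → ℝ vanishing on A, every t ≥ 0 and every x ∈ A^c: (e^{tL̄}(ψ·φ))(x)/ψ(x) = (e^{t(K + D_V)}φ)(x), where D_V is the diagonal matrix with diagonal entries V.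 -/
open scoped Classical
noncomputable section

/-- The matrix `K`: `K(x,y) = L(x,y) ψ(y)/ψ(x)` for `x ≠ y` with `x, y ∈ A^c`,
`K(x,x) = -Σ_{y ∈ A^c, y ≠ x} K(x,y)` for `x ∈ A^c`, and all rows indexed by `A`
(as well as the entries `K(x,y)` with `y ∈ A`) equal to zero. -/
def transfGen {X : Type*} [Fintype X] (L : Matrix X X ℝ) (A : Set X) (ψ : X → ℝ) :
    Matrix X X ℝ :=
  Matrix.of fun x y =>
    if x ∈ A then 0
    else if x = y then -(∑ z, if z ∈ A ∨ z = x then 0 else L x z * ψ z / ψ x)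
    else if y ∈ A then 0
    else L x y * ψ y / ψ x

/-- The potential `V = Lψ/ψ` on `A^c`, set to `0` on `A`. -/
def potential {X : Type*} [Fintype X] (L : Matrix X X ℝ) (A : Set X) (ψ : X → ℝ) (x : X) : ℝ :=
  if x ∈ A then 0 else L.mulVec ψ x / ψ x

/-
With `S = diag ψ`, the matrix `K + D_V` is, on the rows of `A^c`, the Doob transform
`ψ(x)⁻¹ L(x,y) ψ(y)` of `L` with the columns of `A` removed: the potential `V = Lψ/ψ` puts back
exactly the diagonal entry `L(x,x)` that the row normalisation of `K` takes away. As `ψ` vanishes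
on `A` and `L̄` vanishes on the rows of `A`, this gives `S (K + D_V) = L̄ S`. The intertwining
passes to the exponential series, `S e^{t(K + D_V)} = e^{tL̄} S`, and applying both sides to `φ`
and dividing by `ψ(x) > 0` gives the identity.
-/

open Matrix

theorem Matrix.exp_mulVec_mul_of_semiconjBy_diagonal {m 𝕜 : Type*} [Fintype m] [DecidableEq m]
    [RCLike 𝕜] {ψ : m → 𝕜} {B C : Matrix m m 𝕜} (h : SemiconjBy (diagonal ψ) B C)
    (φ : m → 𝕜) :
    NormedSpace.exp C *ᵥ (ψ * φ) = ψ * (NormedSpace.exp B *ᵥ φ) := by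
  have hexp : diagonal ψ * NormedSpace.exp B = NormedSpace.exp C * diagonal ψ :=
    open scoped Norms.Operator in h.exp_right
  have hψ (w : m → 𝕜) : diagonal ψ *ᵥ w = ψ * w := funext (mulVec_diagonal ψ w)
  rw [← hψ, mulVec_mulVec, ← hexp, ← mulVec_mulVec, hψ]

section

variable {X : Type*} [Fintype X] (L : Matrix X X ℝ) {A : Set X} {ψ : X → ℝ}

theorem transfGen_apply_self (hψ_A : ∀ x ∈ A, ψ x = 0) {x : X} (hx : x ∉ A) :
    transfGen L A ψ x x = L x x * ψ x / ψ x - (L *ᵥ ψ) x / ψ x := by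
  set f : X → ℝ := fun z => L x z * ψ z / ψ x
  have hsplit (z : X) : f z = (if z ∈ A ∨ z = x then 0 else f z) + if z = x then f z else 0 := by
    by_cases hz : z = x
    · simp [hz]
    by_cases hzA : z ∈ A
    · simp [hz, hzA, f, hψ_A z hzA]
    · simp [hz, hzA]
  have hLψ : (L *ᵥ ψ) x / ψ x = ∑ z, f z := by
    simp only [mulVec, dotProduct, Finset.sum_div, f]
  rw [hLψ, Finset.sum_congr rfl fun z _ => hsplit z, Finset.sum_add_distrib, Finset.sum_ite_eq']
  simp [transfGen, hx, f]

theorem transfGen_add_diagonal_potential_apply_of_notMem [DecidableEq X]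
    (hψ_A : ∀ x ∈ A, ψ x = 0) {x : X} (hx : x ∉ A) (y : X) :
    (transfGen L A ψ + diagonal (potential L A ψ)) x y =
      if y ∈ A then 0 else L x y * ψ y / ψ x := by
  rcases eq_or_ne x y with rfl | hxy
  · simp [transfGen_apply_self L hψ_A hx, potential, hx]
  · simp [transfGen, hx, hxy]

theorem semiconjBy_diagonal_transfGen_add_diagonal_potential [DecidableEq X]
    (hψ_A : ∀ x ∈ A, ψ x = 0) (hψ : ∀ x ∉ A, ψ x ≠ 0) :
    SemiconjBy (diagonal ψ) (transfGen L A ψ + diagonal (potential L A ψ)) (stoppedGen L A) := by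
  ext x y
  rw [diagonal_mul, mul_diagonal]
  by_cases hx : x ∈ A
  · simp [stoppedGen, hx, hψ_A x hx]
  rw [transfGen_add_diagonal_potential_apply_of_notMem L hψ_A hx, stoppedGen, of_apply, if_neg hx]
  split_ifs with hy
  · simp [hψ_A y hy]
  · field_simp [hψ x hx]

end

theorem stopped_semigroup_conjugation_general
    {X : Type*} [Fintype X] [DecidableEq X]
    (L : Matrix X X ℝ)
    (A : Set X) (ψ : X → ℝ)
    (hψ_pos : ∀ x ∉ A, 0 < ψ x) (hψ_A : ∀ x ∈ A, ψ x = 0) :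
    ∀ φ : X → ℝ, (∀ x ∈ A, φ x = 0) → ∀ t : ℝ, 0 ≤ t → ∀ x ∉ A,
      (NormedSpace.exp (t • stoppedGen L A)).mulVec (fun y => ψ y * φ y) x / ψ x =
        (NormedSpace.exp
            (t • (transfGen L A ψ + Matrix.diagonal (potential L A ψ)))).mulVec φ x := by
  intro φ _ t _ x hx
  have hconj := (semiconjBy_diagonal_transfGen_add_diagonal_potential L hψ_A
    fun y hy => (hψ_pos y hy).ne').smul_right t
  rw [show (fun y => ψ y * φ y) = ψ * φ from rfl, exp_mulVec_mul_of_semiconjBy_diagonal hconj φ,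
    Pi.mul_apply, mul_div_cancel_left₀ _ (hψ_pos x hx).ne']

/-- **Equation (2.3) / Feynman–Kac identity.**  For every `φ` vanishing on `A`, `t ≥ 0`
and `x ∈ A^c`: `(e^{t L̄}(ψ·φ))(x)/ψ(x) = (e^{t(K + D_V)} φ)(x)`. -/
theorem stopped_semigroup_conjugation
    {X : Type*} [Fintype X] [DecidableEq X]
    (L : Matrix X X ℝ)
    (hL_offdiag : ∀ x y, x ≠ y → 0 ≤ L x y)
    (hL_row : ∀ x, ∑ y, L x y = 0)
    (A : Set X) (ψ : X → ℝ)
    (hψ_pos : ∀ x ∉ A, 0 < ψ x) (hψ_A : ∀ x ∈ A, ψ x = 0) :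
    ∀ φ : X → ℝ, (∀ x ∈ A, φ x = 0) → ∀ t : ℝ, 0 ≤ t → ∀ x ∉ A,
      (NormedSpace.exp (t • stoppedGen L A)).mulVec (fun y => ψ y * φ y) x / ψ x =
        (NormedSpace.exp
            (t • (transfGen L A ψ + Matrix.diagonal (potential L A ψ)))).mulVec φ x :=
  stopped_semigroup_conjugation_general L A ψ hψ_pos hψ_A
end
end

section
/- Let A ⊆ Ω_n be an upper set (η ∈ A and η ≤ ζ imply ζ ∈ A) with A ≠ Ω_n, and let β > 0. For the generator L_β^{n,ρ}, the survival probability is decreasing: for every t ≥ 0 and all η ≤ ζ in Ω_n, P_ζ(τ_A > t) ≤ P_η(τ_A > t). Consequently, for every t ≥ 0 and every increasing φ : Ω_n → ℝ, T_t(ν_ρ)(φ) ≤ ν_ρ(φ), i.e. T_t(ν_ρ) ≼ ν_ρ. -/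
open scoped Classical
noncomputable section

/-- `Λ_n = [-n,n]^d ∩ ℤ^d`. -/
def Lam (d n : ℕ) : Finset (Fin d → ℤ) :=
  Finset.Icc (fun _ => -(n : ℤ)) (fun _ => (n : ℤ))

/-- The sites of `Λ_n`. -/
abbrev Site (d n : ℕ) := {i : Fin d → ℤ // i ∈ Lam d n}

/-- `Ω_n = {0,1}^{Λ_n}` (with `Bool` for `{0,1}`, ordered by `false < true`). -/
abbrev Conf (d n : ℕ) := Site d n → Bool

/-- The nearest-neighbor relation on `ℤ^d`. -/
def Nbr {d : ℕ} (i j : Fin d → ℤ) : Prop := ∑ k, |i k - j k| = 1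

/-- The origin, as a site of `Λ_n`. -/
def site0 (d n : ℕ) : Site d n :=
  ⟨0, by simp [Lam, Finset.mem_Icc, Pi.le_def]⟩

/-- `T^{i,j}η` exchanges the coordinates `i` and `j` of `η`. -/
def exch {d n : ℕ} (i j : Site d n) (η : Conf d n) : Conf d n :=
  fun k => if k = i then η j else if k = j then η i else η k

/-- `σ^i η` flips the coordinate `i` of `η`. -/
def flp {d n : ℕ} (i : Site d n) (η : Conf d n) : Conf d n :=
  fun k => if k = i then !(η k) else η k

/-- `n(i) = #{j ∉ Λ_n : j ∼ i}` (each site of `ℤ^d` has exactly `2d` neighbors). -/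
def nOut {d n : ℕ} (i : Site d n) : ℤ :=
  2 * d - ((Lam d n).filter (fun j => Nbr i.1 j)).card

/-- `κ = √((1-ρ)/ρ)`. -/
def kap (ρ : ℝ) : ℝ := Real.sqrt ((1 - ρ) / ρ)

/-- `κ^{2η(i)-1}`. -/
def bdRate {d n : ℕ} (ρ : ℝ) (η : Conf d n) (i : Site d n) : ℝ :=
  kap ρ ^ (2 * (if η i then (1 : ℤ) else 0) - 1)

/-- The finite-volume SSEP generator with `ρ`-boundary:
`L^{n,ρ}φ(η) = Σ_{i∼j, i,j∈Λ_n}(φ(T^{i,j}η) − φ(η))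
             + Σ_{i∈∂Λ_n} n(i) κ^{2η(i)−1}(φ(σ^iη) − φ(η))`
(the sum over bonds `i ∼ j` is written as half the sum over ordered pairs). -/
def Lse {d n : ℕ} (ρ : ℝ) (φ : Conf d n → ℝ) (η : Conf d n) : ℝ :=
  (∑ i : Site d n, ∑ j : Site d n,
      if Nbr i.1 j.1 then φ (exch i j η) - φ η else 0) / 2
  + ∑ i : Site d n, (nOut i : ℝ) * bdRate ρ η i * (φ (flp i η) - φ η)

/-- `L_β^{n,ρ}φ = L^{n,ρ}φ + (β−1)(φ∘T^{0,0'} − φ)`, where `z'` plays the role of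
the fixed neighbor `0'` of the origin. -/
def Lbeta {d n : ℕ} (ρ β : ℝ) (z' : Site d n) (φ : Conf d n → ℝ) (η : Conf d n) : ℝ :=
  Lse ρ φ η + (β - 1) * (φ (exch (site0 d n) z' η) - φ η)

/-- The matrix of an operator on `Conf d n → ℝ` (entry `(η,ζ)` is the operator
applied to the indicator of `ζ`, evaluated at `η`). -/
def opMatrix {d n : ℕ} (Lop : (Conf d n → ℝ) → Conf d n → ℝ) :
    Matrix (Conf d n) (Conf d n) ℝ :=
  Matrix.of fun η ζ => Lop (fun ξ => if ξ = ζ then 1 else 0) η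

/-- The stopped matrix: rows indexed by `A` are replaced by zero rows. -/
def stopped {d n : ℕ} (A : Set (Conf d n)) (M : Matrix (Conf d n) (Conf d n) ℝ) :
    Matrix (Conf d n) (Conf d n) ℝ :=
  Matrix.of fun η ζ => if η ∈ A then 0 else M η ζ

/-- `P_η(τ_A > t) = (e^{t L̄} 1_{A^c})(η)`. -/
def surv {d n : ℕ} (A : Set (Conf d n)) (M : Matrix (Conf d n) (Conf d n) ℝ)
    (t : ℝ) (η : Conf d n) : ℝ :=
  (NormedSpace.exp (t • stopped A M)).mulVec (fun ζ => if ζ ∈ A then 0 else 1) η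

/-- The product Bernoulli(`ρ`) measure on `Ω_n`. -/
def nuRho {d n : ℕ} (ρ : ℝ) (η : Conf d n) : ℝ :=
  ∏ i, if η i then ρ else 1 - ρ

/-- The law at time `t` conditioned on survival, started from `ν_ρ`:
`T_t(ν_ρ)(φ) = [Σ_η ν_ρ(η)(e^{tL̄}(1_{A^c}φ))(η)] / [Σ_η ν_ρ(η)(e^{tL̄}1_{A^c})(η)]`. -/
def Tt {d n : ℕ} (ρ : ℝ) (A : Set (Conf d n)) (M : Matrix (Conf d n) (Conf d n) ℝ)
    (t : ℝ) (φ : Conf d n → ℝ) : ℝ :=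
  (∑ η, nuRho ρ η *
      (NormedSpace.exp (t • stopped A M)).mulVec
        (fun ζ => if ζ ∈ A then 0 else φ ζ) η) /
    ∑ η, nuRho ρ η * surv A M t η
/-
Let `L̄` be `L_β^{n,ρ}` killed on `A` and `c` a bound for the total jump rate. Then
`e^{tL̄} = e^{-ct} e^{t(L̄ + c)}`, and `L̄ + c` maps the closed cone of nonnegative decreasing
functions vanishing on `A` into itself: exchanges are monotone, and at a site where `ζ ≥ η` has a
particle and `η` has none the flips are coupled through `η ≤ σ^i ζ` and `σ^i η ≤ ζ`. So the survival
probability `s_t = e^{tL̄} 1_{Aᶜ}` is decreasing, and at least `e^{-ct}` off `A`. Detailed balance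
makes `ν_ρ` reversible for the killed process, so the numerator of `T_t(ν_ρ)(φ)` is `ν_ρ(φ s_t)`,
and Harris' inequality for the product measure `ν_ρ` bounds it by `ν_ρ(φ) ν_ρ(s_t)`.
-/

namespace Matrix

open scoped Nat

variable {ι : Type*} [Fintype ι] [DecidableEq ι]

open scoped Norms.Operator in
theorem hasSum_exp (X : Matrix ι ι ℝ) :
    HasSum (fun k : ℕ => (k ! : ℝ)⁻¹ • X ^ k) (NormedSpace.exp X) :=
  NormedSpace.exp_series_hasSum_exp' X

open scoped Norms.Operator in
theorem IsSymm.mul_exp {D B : Matrix ι ι ℝ} (hD : D.IsSymm) (h : (D * B).IsSymm) :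
    (D * NormedSpace.exp B).IsSymm := by
  have hB : SemiconjBy D B Bᵀ := by
    rw [SemiconjBy, ← h.eq, transpose_mul, hD.eq]
  rw [IsSymm, transpose_mul, hD.eq, ← exp_transpose]
  exact hB.exp_right.symm

theorem exp_mul_of_isIdempotentElem {P : Matrix ι ι ℝ} (hP : IsIdempotentElem P)
    (M : Matrix ι ι ℝ) :
    NormedSpace.exp (P * M) * P = NormedSpace.exp (P * M * P) * P := by
  have hpow : ∀ k : ℕ, (P * M) ^ k * P = (P * M * P) ^ k * P := by
    intro k
    induction k with
    | zero => simp
    | succ k ih =>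
      calc (P * M) ^ (k + 1) * P = (P * M) ^ k * P * (M * P) := by noncomm_ring
        _ = (P * M * P) ^ k * (P * M * P) := by rw [ih]; noncomm_ring
        _ = (P * M * P) ^ (k + 1) * P := by simp only [pow_succ, mul_assoc, hP.eq]
  refine ((hasSum_exp _).mul_right P).unique ?_
  simpa only [smul_mul_assoc, hpow] using (hasSum_exp _).mul_right P

theorem exp_smul_one (r : ℝ) : NormedSpace.exp (r • (1 : Matrix ι ι ℝ)) = Real.exp r • 1 := by
  rw [smul_one_eq_diagonal, exp_diagonal, smul_one_eq_diagonal, Real.exp_eq_exp_ℝ, Pi.exp_def]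

theorem exp_smul_eq_exp_smul_add (M : Matrix ι ι ℝ) (t c : ℝ) :
    NormedSpace.exp (t • M) = Real.exp (-(t * c)) • NormedSpace.exp (t • (M + c • 1)) := by
  have hsplit : t • M = t • (M + c • 1) + (-(t * c)) • (1 : Matrix ι ι ℝ) := by
    rw [smul_add, smul_smul, add_assoc, ← add_smul]; simp
  rw [hsplit, exp_add_of_commute _ _ ((Commute.one_right _).smul_right _), exp_smul_one,
    mul_smul_one]

theorem hasSum_exp_mulVec (X : Matrix ι ι ℝ) (v : ι → ℝ) :
    HasSum (fun k : ℕ => ((k ! : ℝ)⁻¹ • X ^ k) *ᵥ v) (NormedSpace.exp X *ᵥ v) :=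
  (hasSum_exp X).map (mulVec.addMonoidHomLeft v) (continuous_id.matrix_mulVec continuous_const)

theorem exp_smul_mulVec_sub_mem {K : ProperCone ℝ (ι → ℝ)} {N : Matrix ι ι ℝ}
    (hN : ∀ v ∈ K, N *ᵥ v ∈ K) {t : ℝ} (ht : 0 ≤ t) {v : ι → ℝ} (hv : v ∈ K) :
    NormedSpace.exp (t • N) *ᵥ v - v ∈ K := by
  have hterm : ∀ k, ((k ! : ℝ)⁻¹ • (t • N) ^ k) *ᵥ v ∈ K := by
    intro k
    rw [smul_pow, smul_smul, smul_mulVec]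
    refine K.smul_mem ?_ (by positivity)
    induction k with
    | zero => simpa using hv
    | succ k ih => rw [pow_succ', ← mulVec_mulVec]; exact hN _ ih
  have htail := (hasSum_nat_add_iff' 1).mpr (hasSum_exp_mulVec (t • N) v)
  rw [Finset.sum_range_one, pow_zero, Nat.factorial_zero, Nat.cast_one, inv_one, one_smul,
    one_mulVec] at htail
  exact K.isClosed.mem_of_tendsto htail
    (.of_forall fun s => K.toPointedCone.sum_mem fun k _ => hterm (k + 1))

theorem exp_smul_mulVec_sub_exp_smul_mem {K : ProperCone ℝ (ι → ℝ)} {M : Matrix ι ι ℝ} {c : ℝ}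
    (hM : ∀ v ∈ K, (M + c • 1) *ᵥ v ∈ K) {t : ℝ} (ht : 0 ≤ t) {v : ι → ℝ} (hv : v ∈ K) :
    NormedSpace.exp (t • M) *ᵥ v - Real.exp (-(t * c)) • v ∈ K := by
  rw [exp_smul_eq_exp_smul_add M t c, smul_mulVec, ← smul_sub]
  exact K.smul_mem (exp_smul_mulVec_sub_mem hM ht hv) (Real.exp_pos _).le

theorem IsSymm.mul_exp_mul_mul {D P M : Matrix ι ι ℝ} (hD : D.IsSymm) (hP : P.IsSymm)
    (hPP : IsIdempotentElem P) (hPD : Commute P D) (h : (D * M).IsSymm) :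
    (D * (NormedSpace.exp (P * M) * P)).IsSymm := by
  rw [exp_mul_of_isIdempotentElem hPP]
  set B := P * M * P
  have hPB : Commute P B := by
    simp only [B, Commute, SemiconjBy, ← mul_assoc, hPP.eq]; simp only [mul_assoc, hPP.eq]
  have hDB : (D * B).IsSymm := by
    have : D * B = P * (D * M) * P := by simp only [B, ← mul_assoc, hPD.eq]
    rw [this, IsSymm, transpose_mul, transpose_mul, h.eq, hP.eq]
    simp only [mul_assoc]
  rw [IsSymm, ← mul_assoc, transpose_mul, (hD.mul_exp hDB).eq, hP.eq, ← mul_assoc, hPD.eq,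
    mul_assoc, mul_assoc, hPB.exp_right.eq]

theorem sum_mul_mulVec_of_isSymm {ν : ι → ℝ} {X : Matrix ι ι ℝ} (h : (diagonal ν * X).IsSymm)
    (f : ι → ℝ) : ∑ i, ν i * (X *ᵥ f) i = ∑ i, ν i * f i * (X *ᵥ 1) i := by
  have hX : ∀ i j, ν i * X i j = ν j * X j i := fun i j => by
    simpa only [diagonal_mul] using (h.apply i j).symm
  simp only [mulVec, dotProduct, Finset.mul_sum, Pi.one_apply, mul_one]
  rw [Finset.sum_comm]
  refine Finset.sum_congr rfl fun j _ => Finset.sum_congr rfl fun i _ => ?_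
  rw [← mul_assoc, hX]; ring

end Matrix

theorem fkg_of_monotone_of_antitone {α : Type*} [DistribLattice α] [Fintype α]
    {μ f g : α → ℝ} (hμ₀ : 0 ≤ μ) (hμ₁ : ∑ a, μ a = 1)
    (hμ : ∀ a b, μ a * μ b ≤ μ (a ⊓ b) * μ (a ⊔ b)) (hf : Monotone f) (hg : Antitone g) :
    ∑ a, μ a * f a * g a ≤ (∑ a, μ a * f a) * ∑ a, μ a * g a := by
  obtain ⟨m, hm⟩ := (Set.finite_range f).bddBelow
  obtain ⟨M, hM⟩ := (Set.finite_range g).bddAbove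
  have key := fkg (fun a => f a - m) (fun a => M - g a) μ hμ₀
    (fun a => sub_nonneg.2 (hm ⟨a, rfl⟩)) (fun a => sub_nonneg.2 (hM ⟨a, rfl⟩))
    (fun a b hab => sub_le_sub_right (hf hab) m) (fun a b hab => sub_le_sub_left (hg hab) M) hμ
  simp only [mul_sub, sub_mul, Finset.sum_sub_distrib, ← Finset.sum_mul, hμ₁] at key
  have hfM : ∑ a, μ a * (f a * M) = M * ∑ a, μ a * f a := by
    rw [Finset.mul_sum]; exact Finset.sum_congr rfl fun a _ => by ring
  have hmg : ∑ a, μ a * (m * g a) = m * ∑ a, μ a * g a := by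
    rw [Finset.mul_sum]; exact Finset.sum_congr rfl fun a _ => by ring
  rw [hfM, hmg] at key
  simp only [mul_assoc]
  linarith

section Neighbors

variable {d : ℕ}

theorem Nbr.symm {i j : Fin d → ℤ} (h : Nbr i j) : Nbr j i := by
  simpa only [Nbr, abs_sub_comm] using h

theorem Nbr.exists_eq_update {i j : Fin d → ℤ} (h : Nbr i j) :
    ∃ k : Fin d, ∃ s : Bool, j = Function.update i k (i k + if s then 1 else -1) := by
  obtain ⟨k, hk⟩ : ∃ k, i k ≠ j k := by
    by_contra! hij
    simp [Nbr, hij] at h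
  have hsplit := Finset.add_sum_erase Finset.univ (fun l => |i l - j l|) (Finset.mem_univ k)
  have hk1 : 1 ≤ |i k - j k| := Int.one_le_abs (sub_ne_zero.2 hk)
  have hrest : ∑ l ∈ Finset.univ.erase k, |i l - j l| = 0 := by
    have := Finset.sum_nonneg fun l (_ : l ∈ Finset.univ.erase k) => abs_nonneg (i l - j l)
    rw [Nbr] at h; omega
  have heq : ∀ l ≠ k, j l = i l := fun l hl => by
    have := (Finset.sum_eq_zero_iff_of_nonneg fun l _ => abs_nonneg (i l - j l)).1 hrest l
      (Finset.mem_erase.2 ⟨hl, Finset.mem_univ l⟩)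
    rw [abs_eq_zero, sub_eq_zero] at this; exact this.symm
  refine ⟨k, decide (j k = i k + 1), funext fun l => ?_⟩
  by_cases hl : l = k
  · subst hl
    rw [Function.update_self]
    rw [Nbr] at h
    have : |i l - j l| = 1 := by omega
    rcases abs_eq (zero_le_one' ℤ) |>.1 this with h' | h' <;> split_ifs <;> simp_all <;> omega
  · rw [Function.update_of_ne hl, heq l hl]

theorem card_filter_nbr_le (s : Finset (Fin d → ℤ)) (i : Fin d → ℤ) :
    (s.filter fun j => Nbr i j).card ≤ 2 * d := by
  have hsub : (s.filter fun j => Nbr i j) ⊆ Finset.univ.image fun p : Fin d × Bool =>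
      Function.update i p.1 (i p.1 + if p.2 then 1 else -1) := fun j hj => by
    obtain ⟨k, s, rfl⟩ := Nbr.exists_eq_update (Finset.mem_filter.1 hj).2
    exact Finset.mem_image.2 ⟨(k, s), Finset.mem_univ _, rfl⟩
  calc (s.filter fun j => Nbr i j).card ≤ (Finset.univ : Finset (Fin d × Bool)).card :=
        (Finset.card_le_card hsub).trans Finset.card_image_le
    _ = 2 * d := by simp [mul_comm]

end Neighbors

section SurvCone

variable {α : Type*} [Preorder α]

def survCone (A : Set α) : ProperCone ℝ (α → ℝ) where
  carrier := {f | 0 ≤ f ∧ Antitone f ∧ ∀ a ∈ A, f a = 0}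
  add_mem' := fun ⟨hf₀, hf, hfA⟩ ⟨hg₀, hg, hgA⟩ =>
    ⟨add_nonneg hf₀ hg₀, hf.add hg, fun a ha => by simp [hfA a ha, hgA a ha]⟩
  zero_mem' := ⟨le_rfl, antitone_const, fun _ _ => rfl⟩
  smul_mem' := fun c f ⟨hf₀, hf, hfA⟩ =>
    ⟨smul_nonneg c.2 hf₀, fun a b h => smul_le_smul_of_nonneg_left (hf h) c.2,
      fun a ha => by simp [hfA a ha]⟩
  isClosed' := by
    simp only [Set.ofPred_and, Set.ofPred_forall]
    exact (isClosed_le continuous_const continuous_id).inter <| isClosed_antitone.inter <|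
      isClosed_biInter fun a _ => isClosed_eq (continuous_apply a) continuous_const

theorem indicator_compl_mem_survCone {A : Set α} (hA : IsUpperSet A) :
    (fun x => if x ∈ A then 0 else 1 : α → ℝ) ∈ survCone A := by
  refine ⟨fun x => by dsimp only; split_ifs <;> norm_num, fun x y h => ?_, fun a ha => if_pos ha⟩
  by_cases hx : x ∈ A
  · simp [hx, hA h hx]
  · simp only [hx, if_false]; split_ifs <;> norm_num

end SurvCone

namespace SSEP

open Matrix

variable {d n : ℕ}

theorem exch_eq_comp_swap (i j : Site d n) (η : Conf d n) :
    exch i j η = η ∘ Equiv.swap i j := by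
  funext k
  simp only [exch, Function.comp_apply, Equiv.swap_apply_def]
  split_ifs <;> simp_all

theorem exch_comm (i j : Site d n) (η : Conf d n) : exch i j η = exch j i η := by
  rw [exch_eq_comp_swap, exch_eq_comp_swap, Equiv.swap_comm]

theorem exch_exch (i j : Site d n) (η : Conf d n) : exch i j (exch i j η) = η := by
  funext k
  simp only [exch_eq_comp_swap, Function.comp_apply, Equiv.swap_apply_self]

theorem exch_mono (i j : Site d n) : Monotone (exch i j) := fun _ _ h k => by
  simp only [exch]; split_ifs <;> apply h

theorem nuRho_exch (ρ : ℝ) (i j : Site d n) (η : Conf d n) :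
    nuRho ρ (exch i j η) = nuRho ρ η := by
  rw [exch_eq_comp_swap]
  exact Equiv.prod_comp (Equiv.swap i j) (fun k => if η k then ρ else 1 - ρ)

theorem flp_apply_self (i : Site d n) (η : Conf d n) : flp i η i = !η i := by
  simp [flp]

theorem flp_apply_of_ne {i k : Site d n} (η : Conf d n) (h : k ≠ i) : flp i η k = η k := by
  simp [flp, h]

theorem flp_flp (i : Site d n) (η : Conf d n) : flp i (flp i η) = η := by
  funext k
  by_cases h : k = i
  · subst h; simp [flp_apply_self]
  · simp [flp_apply_of_ne _ h]

theorem flp_le_flp {i : Site d n} {η ζ : Conf d n} (h : η ≤ ζ) (hi : η i = ζ i) :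
    flp i η ≤ flp i ζ := fun k => by
  by_cases hk : k = i
  · subst hk; simp [flp_apply_self, hi]
  · simpa [flp_apply_of_ne _ hk] using h k

theorem le_flp {i : Site d n} {η ζ : Conf d n} (h : η ≤ ζ) (hi : η i = false) :
    η ≤ flp i ζ := fun k => by
  by_cases hk : k = i
  · subst hk; simp [hi]
  · simpa [flp_apply_of_ne _ hk] using h k

theorem flp_le {i : Site d n} {η ζ : Conf d n} (h : η ≤ ζ) (hi : ζ i = true) :
    flp i η ≤ ζ := fun k => by
  by_cases hk : k = i
  · subst hk; simp [hi]
  · simpa [flp_apply_of_ne _ hk] using h k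

theorem nOut_nonneg (i : Site d n) : 0 ≤ nOut i := by
  have := card_filter_nbr_le (Lam d n) i.1
  rw [nOut]; omega

theorem kap_pos {ρ : ℝ} (hρ : ρ ∈ Set.Ioo (0 : ℝ) 1) : 0 < kap ρ :=
  Real.sqrt_pos.2 (div_pos (sub_pos.2 hρ.2) hρ.1)

theorem bdRate_of_true (ρ : ℝ) {η : Conf d n} {i : Site d n} (h : η i = true) :
    bdRate ρ η i = kap ρ := by
  simp [bdRate, h]

theorem bdRate_of_false (ρ : ℝ) {η : Conf d n} {i : Site d n} (h : η i = false) :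
    bdRate ρ η i = (kap ρ)⁻¹ := by
  simp [bdRate, h]

theorem bdRate_pos {ρ : ℝ} (hρ : ρ ∈ Set.Ioo (0 : ℝ) 1) (η : Conf d n) (i : Site d n) :
    0 < bdRate ρ η i :=
  zpow_pos (kap_pos hρ) _

theorem bdRate_le {ρ : ℝ} (hρ : ρ ∈ Set.Ioo (0 : ℝ) 1) (η : Conf d n) (i : Site d n) :
    bdRate ρ η i ≤ kap ρ + (kap ρ)⁻¹ := by
  have hk := kap_pos hρ
  cases h : η i
  · rw [bdRate_of_false ρ h]; linarith
  · rw [bdRate_of_true ρ h]; linarith [inv_pos.2 hk]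

-- Detailed balance of a single flip: `ρ κ = (1 - ρ) κ⁻¹`.
theorem weight_mul_bdRate_flp {ρ : ℝ} (hρ : ρ ∈ Set.Ioo (0 : ℝ) 1) (η : Conf d n) (i : Site d n) :
    (if flp i η i then ρ else 1 - ρ) * bdRate ρ (flp i η) i
      = (if η i then ρ else 1 - ρ) * bdRate ρ η i := by
  have hk := kap_pos hρ
  have hbal : ρ * kap ρ = (1 - ρ) * (kap ρ)⁻¹ := by
    have : kap ρ ^ 2 = (1 - ρ) / ρ := Real.sq_sqrt (div_nonneg (sub_pos.2 hρ.2).le hρ.1.le)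
    field_simp
    rw [this]; field_simp [hρ.1.ne']
  cases h : η i
  · rw [bdRate_of_false ρ h, bdRate_of_true ρ (by simp [flp_apply_self, h])]
    simp [flp_apply_self, h, hbal]
  · rw [bdRate_of_true ρ h, bdRate_of_false ρ (by simp [flp_apply_self, h])]
    simp [flp_apply_self, h, hbal]

theorem nuRho_flp_mul_bdRate {ρ : ℝ} (hρ : ρ ∈ Set.Ioo (0 : ℝ) 1) (η : Conf d n) (i : Site d n) :
    nuRho ρ (flp i η) * bdRate ρ (flp i η) i = nuRho ρ η * bdRate ρ η i := by
  have hrest : ∏ k ∈ Finset.univ.erase i, (if flp i η k then ρ else 1 - ρ)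
      = ∏ k ∈ Finset.univ.erase i, (if η k then ρ else 1 - ρ) :=
    Finset.prod_congr rfl fun k hk => by rw [flp_apply_of_ne _ (Finset.ne_of_mem_erase hk)]
  simp only [nuRho, ← Finset.mul_prod_erase Finset.univ _ (Finset.mem_univ i), hrest]
  rw [mul_right_comm, weight_mul_bdRate_flp hρ, mul_right_comm]

/-- Exchange rate across the ordered pair `(i, j)`: each bond carries total rate `1`, the bond
`{0, 0'}` total rate `β`, split evenly between its two orientations. -/
def exchRate (β : ℝ) (z' : Site d n) (i j : Site d n) : ℝ :=
  (if Nbr i.1 j.1 then (1 : ℝ) / 2 else 0)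
    + (if (i, j) = (site0 d n, z') then (β - 1) / 2 else 0)
    + (if (i, j) = (z', site0 d n) then (β - 1) / 2 else 0)

def flipRate (ρ : ℝ) (η : Conf d n) (i : Site d n) : ℝ := (nOut i : ℝ) * bdRate ρ η i

def rateBound (ρ β : ℝ) (z' : Site d n) : ℝ :=
  (∑ i : Site d n, ∑ j : Site d n, exchRate β z' i j)
    + ∑ i : Site d n, (nOut i : ℝ) * (kap ρ + (kap ρ)⁻¹)

theorem exchRate_nonneg {β : ℝ} (hβ : 0 < β) {z' : Site d n} (hz' : Nbr (0 : Fin d → ℤ) z'.1)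
    (i j : Site d n) : 0 ≤ exchRate β z' i j := by
  have hne : z' ≠ site0 d n := fun h => by simp [h, site0, Nbr] at hz'
  have h0 : Nbr (site0 d n).1 z'.1 := hz'
  unfold exchRate
  by_cases h₁ : (i, j) = (site0 d n, z')
  · obtain ⟨rfl, rfl⟩ := Prod.mk.inj h₁
    rw [if_pos h0, if_pos rfl, if_neg fun h => hne (Prod.mk.inj h).2]; linarith
  by_cases h₂ : (i, j) = (z', site0 d n)
  · obtain ⟨rfl, rfl⟩ := Prod.mk.inj h₂
    rw [if_pos h0.symm, if_neg h₁, if_pos rfl]; linarith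
  simp only [h₁, h₂, if_false, add_zero]
  split_ifs <;> norm_num

theorem flipRate_nonneg {ρ : ℝ} (hρ : ρ ∈ Set.Ioo (0 : ℝ) 1) (η : Conf d n) (i : Site d n) :
    0 ≤ flipRate ρ η i :=
  mul_nonneg (Int.cast_nonneg (nOut_nonneg i)) (bdRate_pos hρ η i).le

theorem flipRate_le {ρ : ℝ} (hρ : ρ ∈ Set.Ioo (0 : ℝ) 1) (η : Conf d n) (i : Site d n) :
    flipRate ρ η i ≤ (nOut i : ℝ) * (kap ρ + (kap ρ)⁻¹) :=
  mul_le_mul_of_nonneg_left (bdRate_le hρ η i) (Int.cast_nonneg (nOut_nonneg i))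

theorem Lbeta_eq (ρ β : ℝ) (z' : Site d n) (f : Conf d n → ℝ) (η : Conf d n) :
    Lbeta ρ β z' f η =
      (∑ i : Site d n, ∑ j : Site d n, exchRate β z' i j * (f (exch i j η) - f η))
        + ∑ i : Site d n, flipRate ρ η i * (f (flp i η) - f η) := by
  have hpair : ∀ (a b : Site d n) (c : ℝ),
      ∑ i : Site d n, ∑ j : Site d n, (if (i, j) = (a, b) then c else 0) * (f (exch i j η) - f η)
        = c * (f (exch a b η) - f η) := fun a b c => by
    simp [Prod.ext_iff, ite_and]
  simp only [exchRate, add_mul, Finset.sum_add_distrib, hpair, Lbeta, Lse, flipRate]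
  rw [exch_comm z']
  have hhalf : ∀ i j : Site d n, (if Nbr i.1 j.1 then (1 : ℝ) / 2 else 0) * (f (exch i j η) - f η)
      = (if Nbr i.1 j.1 then f (exch i j η) - f η else 0) / 2 := fun i j => by
    split_ifs <;> ring
  simp only [hhalf, ← Finset.sum_div]
  ring

def LbetaLinear (ρ β : ℝ) (z' : Site d n) : (Conf d n → ℝ) →ₗ[ℝ] Conf d n → ℝ where
  toFun := Lbeta ρ β z'
  map_add' f g := funext fun η => by
    simp only [Lbeta_eq, Pi.add_apply, add_sub_add_comm, mul_add, Finset.sum_add_distrib]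
    ring
  map_smul' c f := funext fun η => by
    simp only [Lbeta_eq, Pi.smul_apply, smul_eq_mul, RingHom.id_apply, ← mul_sub,
      mul_left_comm _ c, ← Finset.mul_sum, mul_add]

theorem opMatrix_mulVec (L : (Conf d n → ℝ) →ₗ[ℝ] Conf d n → ℝ) (f : Conf d n → ℝ) :
    opMatrix L *ᵥ f = L f := by
  have : opMatrix L = LinearMap.toMatrix' L := by
    ext η ζ
    simp only [opMatrix, of_apply, LinearMap.toMatrix'_apply]
    rw [← funext fun ξ => Pi.single_apply ζ (1 : ℝ) ξ]
  rw [this, LinearMap.toMatrix'_mulVec]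

theorem opMatrix_Lbeta_mulVec (ρ β : ℝ) (z' : Site d n) (f : Conf d n → ℝ) :
    opMatrix (Lbeta ρ β z') *ᵥ f = Lbeta ρ β z' f :=
  opMatrix_mulVec (LbetaLinear ρ β z') f

theorem opMatrix_Lbeta_apply_of_ne (ρ β : ℝ) (z' : Site d n) {η ζ : Conf d n} (h : η ≠ ζ) :
    opMatrix (Lbeta ρ β z') η ζ
      = (∑ i : Site d n, ∑ j : Site d n, exchRate β z' i j * if exch i j η = ζ then 1 else 0)
        + ∑ i : Site d n, flipRate ρ η i * if flp i η = ζ then 1 else 0 := by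
  simp only [opMatrix, of_apply, Lbeta_eq, if_neg h, sub_zero]

theorem isSymm_diagonal_nuRho_mul_opMatrix {ρ : ℝ} (hρ : ρ ∈ Set.Ioo (0 : ℝ) 1) (β : ℝ)
    (z' : Site d n) : (diagonal (nuRho ρ) * opMatrix (Lbeta ρ β z')).IsSymm := by
  refine IsSymm.ext fun η ζ => ?_
  simp only [diagonal_mul]
  rcases eq_or_ne ζ η with rfl | h
  · rfl
  have hexch : ∀ i j, nuRho ρ ζ * (exchRate β z' i j * if exch i j ζ = η then 1 else 0)
      = nuRho ρ η * (exchRate β z' i j * if exch i j η = ζ then 1 else 0) := fun i j => by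
    by_cases hx : exch i j ζ = η
    · subst hx; simp [exch_exch, nuRho_exch]
    · have : exch i j η ≠ ζ := fun h' => hx (by rw [← h', exch_exch])
      simp [hx, this]
  have hflp : ∀ i, nuRho ρ ζ * (flipRate ρ ζ i * if flp i ζ = η then 1 else 0)
      = nuRho ρ η * (flipRate ρ η i * if flp i η = ζ then 1 else 0) := fun i => by
    by_cases hx : flp i ζ = η
    · subst hx
      simp only [flp_flp, if_true, mul_one, flipRate, mul_left_comm _ (nOut i : ℝ),
        nuRho_flp_mul_bdRate hρ]
    · have : flp i η ≠ ζ := fun h' => hx (by rw [← h', flp_flp])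
      simp [hx, this]
  rw [opMatrix_Lbeta_apply_of_ne ρ β z' h, opMatrix_Lbeta_apply_of_ne ρ β z' h.symm]
  simp only [mul_add, Finset.mul_sum, hexch, hflp]

theorem stopped_eq_diagonal_mul (A : Set (Conf d n)) (M : Matrix (Conf d n) (Conf d n) ℝ) :
    stopped A M = diagonal (fun η => if η ∈ A then 0 else 1) * M := by
  ext η ζ
  simp [stopped, diagonal_mul]

variable {ρ β : ℝ} {z' : Site d n}

theorem Lbeta_add_rateBound_mul_nonneg (hρ : ρ ∈ Set.Ioo (0 : ℝ) 1) (hβ : 0 < β)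
    (hz' : Nbr (0 : Fin d → ℤ) z'.1) {f : Conf d n → ℝ} (hf : 0 ≤ f) (η : Conf d n) :
    0 ≤ Lbeta ρ β z' f η + rateBound ρ β z' * f η := by
  have hsplit : Lbeta ρ β z' f η + rateBound ρ β z' * f η
      = (∑ i : Site d n, ∑ j : Site d n, exchRate β z' i j * f (exch i j η))
        + ∑ i : Site d n, (flipRate ρ η i * f (flp i η)
          + ((nOut i : ℝ) * (kap ρ + (kap ρ)⁻¹) - flipRate ρ η i) * f η) := by
    simp only [Lbeta_eq, rateBound, add_mul, Finset.sum_mul, mul_sub, sub_mul,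
      Finset.sum_add_distrib, Finset.sum_sub_distrib]
    ring
  rw [hsplit]
  refine add_nonneg (Finset.sum_nonneg fun i _ => Finset.sum_nonneg fun j _ =>
    mul_nonneg (exchRate_nonneg hβ hz' i j) (hf _)) (Finset.sum_nonneg fun i _ => ?_)
  exact add_nonneg (mul_nonneg (flipRate_nonneg hρ η i) (hf _))
    (mul_nonneg (sub_nonneg.2 (flipRate_le hρ η i)) (hf _))

theorem flipRate_mul_flp_sub_le (hρ : ρ ∈ Set.Ioo (0 : ℝ) 1) {f : Conf d n → ℝ} (hf : Antitone f)
    {η ζ : Conf d n} (h : η ≤ ζ) (i : Site d n) :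
    flipRate ρ ζ i * (f (flp i ζ) - f ζ)
      ≤ flipRate ρ η i * (f (flp i η) - f η)
        + (nOut i : ℝ) * (kap ρ + (kap ρ)⁻¹) * (f η - f ζ) := by
  have hN : (0 : ℝ) ≤ nOut i := Int.cast_nonneg (nOut_nonneg i)
  have hk := kap_pos hρ
  by_cases hi : η i = ζ i
  · have hr : flipRate ρ η i = flipRate ρ ζ i := by simp only [flipRate, bdRate, hi]
    rw [hr]
    nlinarith [hf h, hf (flp_le_flp h hi), flipRate_nonneg hρ ζ i, flipRate_le hρ ζ i]
  -- `ζ` has a particle at `i` and `η` has none: couple through `η ≤ flp i ζ` and `flp i η ≤ ζ`.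
  obtain ⟨hη, hζ⟩ : η i = false ∧ ζ i = true := by
    have := h i; revert this hi; cases η i <;> cases ζ i <;> simp
  have h₁ := hf (le_flp h hη)
  have h₂ := hf (flp_le h hζ)
  rw [flipRate, flipRate, bdRate_of_false ρ hη, bdRate_of_true ρ hζ]
  nlinarith [mul_nonneg (mul_nonneg hN hk.le) (sub_nonneg.2 h₁),
    mul_nonneg (mul_nonneg hN (inv_nonneg.2 hk.le)) (sub_nonneg.2 h₂)]

theorem Lbeta_le_add_rateBound_mul (hρ : ρ ∈ Set.Ioo (0 : ℝ) 1) (hβ : 0 < β)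
    (hz' : Nbr (0 : Fin d → ℤ) z'.1) {f : Conf d n → ℝ} (hf : Antitone f) {η ζ : Conf d n}
    (h : η ≤ ζ) :
    Lbeta ρ β z' f ζ ≤ Lbeta ρ β z' f η + rateBound ρ β z' * (f η - f ζ) := by
  have hexch : ∀ i j, exchRate β z' i j * (f (exch i j ζ) - f ζ)
      ≤ exchRate β z' i j * (f (exch i j η) - f η + (f η - f ζ)) := fun i j =>
    mul_le_mul_of_nonneg_left (by linarith [hf (exch_mono i j h)]) (exchRate_nonneg hβ hz' i j)
  have h₁ := Finset.sum_le_sum fun i (_ : i ∈ Finset.univ) =>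
    Finset.sum_le_sum fun j (_ : j ∈ Finset.univ) => hexch i j
  have h₂ := Finset.sum_le_sum fun i (_ : i ∈ Finset.univ) => flipRate_mul_flp_sub_le hρ hf h i
  simp only [mul_add, Finset.sum_add_distrib] at h₁
  simp only [Finset.sum_add_distrib] at h₂
  rw [Lbeta_eq, Lbeta_eq, rateBound, add_mul, Finset.sum_mul, Finset.sum_mul]
  simp only [Finset.sum_mul] at h₁ ⊢
  linarith

theorem stopped_add_smul_one_mulVec_mem (hρ : ρ ∈ Set.Ioo (0 : ℝ) 1) (hβ : 0 < β)
    (hz' : Nbr (0 : Fin d → ℤ) z'.1) {A : Set (Conf d n)} (hA : IsUpperSet A)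
    {f : Conf d n → ℝ} (hf : f ∈ survCone A) :
    (stopped A (opMatrix (Lbeta ρ β z')) + rateBound ρ β z' • 1) *ᵥ f ∈ survCone A := by
  obtain ⟨hf₀, hf, hfA⟩ := hf
  have happly : ∀ η, ((stopped A (opMatrix (Lbeta ρ β z')) + rateBound ρ β z' • 1) *ᵥ f) η
      = if η ∈ A then 0 else Lbeta ρ β z' f η + rateBound ρ β z' * f η := fun η => by
    rw [add_mulVec, smul_mulVec, one_mulVec, stopped_eq_diagonal_mul, ← mulVec_mulVec,
      opMatrix_Lbeta_mulVec]
    by_cases hη : η ∈ A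
    · simp [mulVec_diagonal, hη, hfA η hη]
    · simp [mulVec_diagonal, hη]
  have hnonneg : ∀ η, 0 ≤ ((stopped A (opMatrix (Lbeta ρ β z')) + rateBound ρ β z' • 1) *ᵥ f) η :=
    fun η => by
      rw [happly]; split_ifs
      exacts [le_rfl, Lbeta_add_rateBound_mul_nonneg hρ hβ hz' hf₀ η]
  refine ⟨hnonneg, fun η ζ h => ?_, fun a ha => by rw [happly, if_pos ha]⟩
  by_cases hζ : ζ ∈ A
  · rw [happly ζ, if_pos hζ]; exact hnonneg η
  rw [happly, happly, if_neg hζ, if_neg fun hη => hζ (hA h hη)]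
  linarith [Lbeta_le_add_rateBound_mul hρ hβ hz' hf h]

theorem nuRho_pos (hρ : ρ ∈ Set.Ioo (0 : ℝ) 1) (η : Conf d n) : 0 < nuRho ρ η :=
  Finset.prod_pos fun i _ => by split_ifs <;> linarith [hρ.1, hρ.2]

theorem sum_nuRho (ρ : ℝ) : ∑ η : Conf d n, nuRho ρ η = 1 := by
  simp only [nuRho]
  rw [← Fintype.prod_sum fun (_ : Site d n) (b : Bool) => if b then ρ else 1 - ρ]
  simp

theorem nuRho_inf_mul_nuRho_sup (ρ : ℝ) (η ζ : Conf d n) :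
    nuRho ρ (η ⊓ ζ) * nuRho ρ (η ⊔ ζ) = nuRho ρ η * nuRho ρ ζ := by
  have key : ∀ a b : Bool, ((if a ⊓ b then ρ else 1 - ρ) * if a ⊔ b then ρ else 1 - ρ)
      = (if a then ρ else 1 - ρ) * if b then ρ else 1 - ρ := by
    intro a b; cases a <;> cases b <;> simp [mul_comm]
  simp only [nuRho, ← Finset.prod_mul_distrib]
  exact Finset.prod_congr rfl fun i _ => key (η i) (ζ i)

theorem surv_sub_mem_survCone (hρ : ρ ∈ Set.Ioo (0 : ℝ) 1) (hβ : 0 < β)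
    (hz' : Nbr (0 : Fin d → ℤ) z'.1) {A : Set (Conf d n)} (hA : IsUpperSet A) {t : ℝ}
    (ht : 0 ≤ t) :
    surv A (opMatrix (Lbeta ρ β z')) t
      - Real.exp (-(t * rateBound ρ β z')) • (fun ζ => if ζ ∈ A then 0 else 1)
      ∈ survCone A :=
  exp_smul_mulVec_sub_exp_smul_mem (fun _ hv => stopped_add_smul_one_mulVec_mem hρ hβ hz' hA hv) ht
    (indicator_compl_mem_survCone hA)

theorem surv_mem_survCone (hρ : ρ ∈ Set.Ioo (0 : ℝ) 1) (hβ : 0 < β)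
    (hz' : Nbr (0 : Fin d → ℤ) z'.1) {A : Set (Conf d n)} (hA : IsUpperSet A) {t : ℝ}
    (ht : 0 ≤ t) : surv A (opMatrix (Lbeta ρ β z')) t ∈ survCone A := by
  simpa using add_mem (surv_sub_mem_survCone hρ hβ hz' hA ht)
    ((survCone A).smul_mem (indicator_compl_mem_survCone hA)
      (Real.exp_pos (-(t * rateBound ρ β z'))).le)

theorem surv_pos (hρ : ρ ∈ Set.Ioo (0 : ℝ) 1) (hβ : 0 < β) (hz' : Nbr (0 : Fin d → ℤ) z'.1)
    {A : Set (Conf d n)} (hA : IsUpperSet A) {t : ℝ} (ht : 0 ≤ t) {η : Conf d n} (hη : η ∉ A) :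
    0 < surv A (opMatrix (Lbeta ρ β z')) t η := by
  have := (surv_sub_mem_survCone hρ hβ hz' hA ht).1 η
  simp only [Pi.zero_apply, Pi.sub_apply, Pi.smul_apply, hη, if_false, smul_eq_mul,
    mul_one, sub_nonneg] at this
  exact (Real.exp_pos _).trans_le this

-- `ν_ρ` is reversible for the process killed on `A`.
theorem sum_nuRho_mul_exp_stopped_mulVec (hρ : ρ ∈ Set.Ioo (0 : ℝ) 1) (A : Set (Conf d n))
    (t : ℝ) (f : Conf d n → ℝ) :
    ∑ η, nuRho ρ η * (NormedSpace.exp (t • stopped A (opMatrix (Lbeta ρ β z')))).mulVec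
        (fun ζ => if ζ ∈ A then 0 else f ζ) η
      = ∑ η, nuRho ρ η * f η * surv A (opMatrix (Lbeta ρ β z')) t η := by
  set p : Conf d n → ℝ := fun η => if η ∈ A then 0 else 1
  have hp : IsIdempotentElem p := funext fun η => by simp only [p, Pi.mul_apply]; split_ifs <;> simp
  have hmulVec : ∀ g : Conf d n → ℝ,
      (NormedSpace.exp (t • stopped A (opMatrix (Lbeta ρ β z')))).mulVec
        (fun ζ => if ζ ∈ A then 0 else g ζ)
        = (NormedSpace.exp (diagonal p * (t • opMatrix (Lbeta ρ β z'))) * diagonal p) *ᵥ g :=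
    fun g => by
      have : (fun ζ => if ζ ∈ A then 0 else g ζ) = diagonal p *ᵥ g := by
        funext ζ; simp only [mulVec_diagonal, p]; split_ifs <;> simp
      rw [this, mulVec_mulVec, stopped_eq_diagonal_mul, Matrix.mul_smul (diagonal p) t]
  have hsymm := (isSymm_diagonal (nuRho ρ)).mul_exp_mul_mul (isSymm_diagonal p)
    (by rw [IsIdempotentElem, diagonal_mul_diagonal']; exact congrArg diagonal hp)
    (commute_diagonal p (nuRho ρ))
    (by rw [Matrix.mul_smul (diagonal (nuRho ρ)) t]
        exact (isSymm_diagonal_nuRho_mul_opMatrix hρ β z').smul t)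
  have hsurv : surv A (opMatrix (Lbeta ρ β z')) t
      = (NormedSpace.exp (diagonal p * (t • opMatrix (Lbeta ρ β z'))) * diagonal p) *ᵥ 1 := by
    rw [← hmulVec]; rfl
  simp only [hmulVec, hsurv]
  exact sum_mul_mulVec_of_isSymm hsymm f

end SSEP

theorem survival_decreasing_and_Tt_le_nuRho_general
    {d n : ℕ}
    (ρ : ℝ) (hρ : ρ ∈ Set.Ioo (0 : ℝ) 1)
    (β : ℝ) (hβ : 0 < β)
    (z' : Site d n) (hz' : Nbr (0 : Fin d → ℤ) z'.1)
    (A : Set (Conf d n))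
    (hA_upper : ∀ η ζ : Conf d n, η ∈ A → η ≤ ζ → ζ ∈ A)
    (hA_ne : A ≠ Set.univ) :
    (∀ t : ℝ, 0 ≤ t → ∀ η ζ : Conf d n, η ≤ ζ →
      surv A (opMatrix (Lbeta ρ β z')) t ζ ≤ surv A (opMatrix (Lbeta ρ β z')) t η) ∧
    (∀ t : ℝ, 0 ≤ t → ∀ φ : Conf d n → ℝ, Monotone φ →
      Tt ρ A (opMatrix (Lbeta ρ β z')) t φ ≤ ∑ η, nuRho ρ η * φ η) := by
  have hA : IsUpperSet A := fun η ζ h hη => hA_upper η ζ hη h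
  have hsurv := fun t (ht : 0 ≤ t) => SSEP.surv_mem_survCone hρ hβ hz' hA ht
  refine ⟨fun t ht η ζ h => (hsurv t ht).2.1 h, fun t ht φ hφ => ?_⟩
  have hden : 0 < ∑ η, nuRho ρ η * surv A (opMatrix (Lbeta ρ β z')) t η :=
    Finset.sum_pos' (fun η _ => mul_nonneg (SSEP.nuRho_pos hρ η).le ((hsurv t ht).1 η))
      ⟨⊥, Finset.mem_univ _, mul_pos (SSEP.nuRho_pos hρ ⊥)
        (SSEP.surv_pos hρ hβ hz' hA ht (hA.bot_mem.not.2 hA_ne))⟩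
  rw [Tt, SSEP.sum_nuRho_mul_exp_stopped_mulVec hρ, div_le_iff₀ hden]
  exact fkg_of_monotone_of_antitone (fun η => (SSEP.nuRho_pos hρ η).le) (SSEP.sum_nuRho ρ)
    (fun η ζ => (SSEP.nuRho_inf_mul_nuRho_sup ρ η ζ).ge) hφ (hsurv t ht).2.1

/-- **Monotonicity of the survival probability (upper bound in Proposition 1.3/1.4).**
For an upper set `A ≠ Ω_n` and any `β > 0`, the survival probability of the process
generated by `L_β^{n,ρ}` is decreasing in the initial configuration, and consequently
`T_t(ν_ρ) ≼ ν_ρ` for every `t ≥ 0`. -/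
theorem survival_decreasing_and_Tt_le_nuRho
    {d n : ℕ} (hd : 1 ≤ d) (hn : 2 ≤ n)
    (ρ : ℝ) (hρ : ρ ∈ Set.Ioo (0 : ℝ) 1)
    (β : ℝ) (hβ : 0 < β)
    (z' : Site d n) (hz' : Nbr (0 : Fin d → ℤ) z'.1)
    (A : Set (Conf d n))
    (hA_upper : ∀ η ζ : Conf d n, η ∈ A → η ≤ ζ → ζ ∈ A)
    (hA_ne : A ≠ Set.univ) :
    (∀ t : ℝ, 0 ≤ t → ∀ η ζ : Conf d n, η ≤ ζ →
      surv A (opMatrix (Lbeta ρ β z')) t ζ ≤ surv A (opMatrix (Lbeta ρ β z')) t η) ∧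
    (∀ t : ℝ, 0 ≤ t → ∀ φ : Conf d n → ℝ, Monotone φ →
      Tt ρ A (opMatrix (Lbeta ρ β z')) t φ ≤ ∑ η, nuRho ρ η * φ η) :=
  survival_decreasing_and_Tt_le_nuRho_general ρ hρ β hβ z' hz' A hA_upper hA_ne
end
end
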